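/- There exists a constant C > 0, independent of τ, of J_1, J_2, and of a, such that for every a ∈ ℐ the family {E_a(μ,ν)}_{(μ,ν) ∈ k_0^{-1}({a})} is C-overlapping; that is, for every point x ∈ ℝ² × ℝ, ∑_{(μ,ν) ∈ k_0^{-1}({a})} χ_{E_a(μ,ν)}(x) ≤ C. -/

import Mathlib

open Set Pointwise

noncomputable def GammaSet (τ μ : ℝ) : Set ℂ :=
  {ξ : ℂ | ξ ≠ 0 ∧ μ * (Real.sqrt τ)⁻¹ ≤ ξ.arg ∧ ξ.arg < (μ + 1) * (Real.sqrt τ)⁻¹}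

def calN (τ : ℝ) : Set ℤ :=
  {μ : ℤ | |(μ : ℝ)| ≤ Real.sqrt τ * (Real.pi / 8) - 1}

noncomputable def uSet (τ μ : ℝ) (J : Set ℝ) : Set (ℂ × ℝ) :=
  {p : ℂ × ℝ | |p.2 - ‖p.1‖| ≤ τ⁻¹ ∧ p.1 ∈ GammaSet τ μ ∧ ‖p.1‖ ∈ J}

noncomputable def calI (τ : ℝ) : Set ℝ :=
  {a : ℝ | ∃ μ ∈ calN τ, ∃ ν ∈ calN τ, a = ((μ : ℝ) + (ν : ℝ)) / 2}

/-! Write a point of `u_{μ,J₁} + u_{ν,J₂}` as `(ξ₁ + ξ₂, η₁ + η₂)`. Then `‖ξ₁ + ξ₂‖` is the third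
side of a triangle with sides `r₁ = ‖ξ₁‖ ∈ J₁`, `r₂ = ‖ξ₂‖ ∈ J₂` and included angle
`δ = arg ξ₁ - arg ξ₂ = (μ - ν) τ^{-1/2} + O(τ^{-1/2})`, while `η₁ + η₂` fixes `r₁ + r₂` up to `2τ⁻¹`.
For two such decompositions of the same point the sides agree up to `τ^{-1/2}` and their sums up
to `4τ⁻¹`, so the law of cosines gives `|cos δ - cos δ'| = O(τ⁻¹ + τ^{-1/2} min(δ, δ')²)`. As
`cos a - cos b ≥ (b² - a²)/5` on `[0, π/4]`, this forces `||δ| - |δ'|| = O(τ^{-1/2})`, i.e.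
`|μ - ν|` is determined up to `O(1)`; since `μ + ν = 2a` is fixed, only `O(1)` pairs remain. -/

open Real

theorem Complex.sq_norm_add (z w : ℂ) :
    ‖z + w‖ ^ 2 = ‖z‖ ^ 2 + ‖w‖ ^ 2 + 2 * ‖z‖ * ‖w‖ * Real.cos (z.arg - w.arg) := by
  have hzw : ‖z‖ * ‖w‖ * Real.cos (z.arg - w.arg) = z.re * w.re + z.im * w.im := by
    rw [Real.cos_sub, ← norm_mul_cos_arg z, ← norm_mul_cos_arg w, ← norm_mul_sin_arg z,
      ← norm_mul_sin_arg w]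
    ring
  rw [Complex.sq_norm, Complex.sq_norm, Complex.sq_norm, mul_assoc 2, mul_assoc 2, hzw,
    normSq_apply, normSq_apply, normSq_apply, add_re, add_im]
  ring

theorem sq_sub_sq_le_mul_cos_sub_cos {a b : ℝ} (ha : 0 ≤ a) (hab : a ≤ b) (hb : b ≤ π / 2) :
    b ^ 2 - a ^ 2 ≤ π ^ 2 / 2 * (cos a - cos b) := by
  have hpi : 0 < π := pi_pos
  have hsum0 : 0 ≤ 2 / π * ((a + b) / 2) := mul_nonneg (by positivity) (by linarith)
  have hdiff0 : 0 ≤ 2 / π * ((b - a) / 2) := mul_nonneg (by positivity) (by linarith)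
  have hsum := mul_le_sin (x := (a + b) / 2) (by linarith) (by linarith)
  have hdiff := mul_le_sin (x := (b - a) / 2) (by linarith) (by linarith)
  have hcos : cos a - cos b = 2 * (sin ((a + b) / 2) * sin ((b - a) / 2)) := by
    rw [cos_sub_cos, ← neg_sub b a, neg_div, sin_neg]
    ring
  calc b ^ 2 - a ^ 2 = π ^ 2 / 2 * (2 * (2 / π * ((a + b) / 2) * (2 / π * ((b - a) / 2)))) := by
        field_simp; ring
    _ ≤ π ^ 2 / 2 * (cos a - cos b) := by
        rw [hcos]; gcongr (π ^ 2 / 2) * (2 * ?_)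
        exact mul_le_mul hsum hdiff hdiff0 (hsum0.trans hsum)

theorem sub_le_nine_mul_of_cos_sub_cos_le {s a b : ℝ} (hs : 0 ≤ s) (ha : 0 ≤ a) (hab : a ≤ b)
    (hb : b ≤ π / 4) (h : cos a - cos b ≤ 16 * s ^ 2 + 4 * s * (1 - cos a)) :
    b - a ≤ 9 * s := by
  have hpi := pi_lt_d2
  have hpi0 := pi_pos
  have hcos : 1 - cos a ≤ a ^ 2 / 2 := by linarith [one_sub_sq_div_two_le_cos (x := a)]
  have hsq : b ^ 2 - a ^ 2 ≤ 5 * (16 * s ^ 2 + 2 * s * a ^ 2) := by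
    have hcos0 : 0 ≤ cos a - cos b :=
      sub_nonneg.2 (cos_le_cos_of_nonneg_of_le_pi ha (by linarith) hab)
    calc b ^ 2 - a ^ 2 ≤ π ^ 2 / 2 * (cos a - cos b) :=
          sq_sub_sq_le_mul_cos_sub_cos ha hab (by linarith)
      _ ≤ 5 * (cos a - cos b) := by gcongr; nlinarith
      _ ≤ 5 * (16 * s ^ 2 + 2 * s * a ^ 2) := by gcongr; nlinarith
  -- As a < 4/5, b - a > 9 s would give b² - a² ≥ 9 s (9 s + 2 a) > 80 s² + 10 s a².
  by_contra! hlt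
  nlinarith [mul_nonneg hs ha]

theorem abs_sub_le_of_third_side_eq {s r₁ r₂ r₁' r₂' c c' : ℝ} (hs : 0 ≤ s)
    (hr₁ : r₁ ∈ Icc (1 : ℝ) 2) (hr₂ : r₂ ∈ Icc (1 : ℝ) 2)
    (hr₁' : r₁' ∈ Icc (1 : ℝ) 2) (hr₂' : r₂' ∈ Icc (1 : ℝ) 2)
    (h₁ : |r₁ - r₁'| ≤ s) (h₂ : |r₂ - r₂'| ≤ s) (hsum : |(r₁ + r₂) - (r₁' + r₂')| ≤ 4 * s ^ 2)
    (heq : r₁ ^ 2 + r₂ ^ 2 + 2 * r₁ * r₂ * c = r₁' ^ 2 + r₂' ^ 2 + 2 * r₁' * r₂' * c')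
    (hc : c ≤ 1) :
    |c - c'| ≤ 16 * s ^ 2 + 4 * s * (1 - c) := by
  obtain ⟨hr₁0, hr₁2⟩ := hr₁
  obtain ⟨hr₂0, hr₂2⟩ := hr₂
  obtain ⟨hr₁'0, hr₁'2⟩ := hr₁'
  obtain ⟨hr₂'0, hr₂'2⟩ := hr₂'
  have hprod : |2 * r₁' * r₂' - 2 * r₁ * r₂| ≤ 8 * s := by
    rw [abs_le] at h₁ h₂ ⊢
    constructor <;> nlinarith
  have hsq : |(r₁ + r₂) ^ 2 - (r₁' + r₂') ^ 2| ≤ 32 * s ^ 2 := by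
    rw [sq_sub_sq, abs_mul]
    calc |r₁ + r₂ + (r₁' + r₂')| * |r₁ + r₂ - (r₁' + r₂')| ≤ 8 * (4 * s ^ 2) := by
          gcongr
          rw [abs_of_pos (by linarith)]
          linarith
      _ = 32 * s ^ 2 := by ring
  -- With D = 2 r₁ r₂ and Σ = r₁ + r₂, the hypothesis reads Σ² - D (1 - c) = Σ'² - D' (1 - c').
  have hid : 2 * r₁' * r₂' * (c' - c) =
      (2 * r₁' * r₂' - 2 * r₁ * r₂) * (1 - c) + ((r₁ + r₂) ^ 2 - (r₁' + r₂') ^ 2) := by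
    linear_combination -heq
  have hbound : 2 * |c - c'| ≤ 8 * s * (1 - c) + 32 * s ^ 2 := by
    calc 2 * |c - c'| ≤ 2 * r₁' * r₂' * |c' - c| := by
          rw [abs_sub_comm]; gcongr; nlinarith
      _ = |2 * r₁' * r₂' * (c' - c)| := by
          rw [abs_mul, abs_of_pos (by positivity : (0 : ℝ) < 2 * r₁' * r₂')]
      _ ≤ |2 * r₁' * r₂' - 2 * r₁ * r₂| * (1 - c) + |(r₁ + r₂) ^ 2 - (r₁' + r₂') ^ 2| := by
          rw [hid, ← abs_of_nonneg (sub_nonneg.2 hc), ← abs_mul, abs_of_nonneg (sub_nonneg.2 hc)]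
          exact abs_add_le _ _
      _ ≤ 8 * s * (1 - c) + 32 * s ^ 2 := by gcongr
  linarith

theorem abs_abs_sub_abs_le_of_third_side_eq {s r₁ r₂ r₁' r₂' δ δ' : ℝ} (hs : 0 ≤ s)
    (hr₁ : r₁ ∈ Icc (1 : ℝ) 2) (hr₂ : r₂ ∈ Icc (1 : ℝ) 2)
    (hr₁' : r₁' ∈ Icc (1 : ℝ) 2) (hr₂' : r₂' ∈ Icc (1 : ℝ) 2)
    (h₁ : |r₁ - r₁'| ≤ s) (h₂ : |r₂ - r₂'| ≤ s) (hsum : |(r₁ + r₂) - (r₁' + r₂')| ≤ 4 * s ^ 2)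
    (heq : r₁ ^ 2 + r₂ ^ 2 + 2 * r₁ * r₂ * cos δ = r₁' ^ 2 + r₂' ^ 2 + 2 * r₁' * r₂' * cos δ')
    (hδ : |δ| ≤ π / 4) (hδ' : |δ'| ≤ π / 4) :
    |(|δ| - |δ'|)| ≤ 9 * s := by
  wlog hle : |δ| ≤ |δ'| generalizing r₁ r₂ r₁' r₂' δ δ'
  · rw [abs_sub_comm]
    exact this hr₁' hr₂' hr₁ hr₂ (by rwa [abs_sub_comm]) (by rwa [abs_sub_comm])
      (by rwa [abs_sub_comm]) heq.symm hδ' hδ (le_of_not_ge hle)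
  have hcos := abs_sub_le_of_third_side_eq hs hr₁ hr₂ hr₁' hr₂' h₁ h₂ hsum heq (cos_le_one δ)
  rw [← cos_abs δ, ← cos_abs δ'] at hcos
  rw [abs_of_nonpos (sub_nonpos.2 hle), neg_sub]
  exact sub_le_nine_mul_of_cos_sub_cos_le hs (abs_nonneg δ) hle hδ' ((le_abs_self _).trans hcos)

theorem abs_abs_sub_abs_le_of_abs_sub_mul_le {s δ δ' K : ℝ} {m m' : ℤ} (hs : 0 < s)
    (hm : |δ - m * s| ≤ s) (hm' : |δ' - m' * s| ≤ s) (h : |(|δ| - |δ'|)| ≤ K * s) :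
    |((|m| - |m'| : ℤ) : ℝ)| ≤ K + 2 := by
  have hms : ∀ {n : ℤ} {ε : ℝ}, |ε - n * s| ≤ s → |(|(n : ℝ)| * s - |ε|)| ≤ s := fun hn => by
    rw [← abs_of_pos hs, ← abs_mul, abs_of_pos hs, abs_sub_comm]
    exact (abs_abs_sub_abs_le_abs_sub _ _).trans hn
  have hmul : |((|m| - |m'| : ℤ) : ℝ)| * s ≤ (K + 2) * s := by
    rw [← abs_of_pos hs, ← abs_mul, abs_of_pos hs]
    push_cast
    calc |(|(m : ℝ)| - |(m' : ℝ)|) * s|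
        = |(|(m : ℝ)| * s - |δ|) + (|δ| - |δ'|) - (|(m' : ℝ)| * s - |δ'|)| := by ring_nf
      _ ≤ s + K * s + s :=
          (abs_sub _ _).trans (add_le_add ((abs_add_le _ _).trans (add_le_add (hms hm) h)) (hms hm'))
      _ = (K + 2) * s := by ring
  exact le_of_mul_le_mul_right hmul hs

theorem abs_arg_sub_arg_sub_le_of_mem_GammaSet {τ μ ν : ℝ} {ξ₁ ξ₂ : ℂ}
    (hξ₁ : ξ₁ ∈ GammaSet τ μ) (hξ₂ : ξ₂ ∈ GammaSet τ ν) :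
    |ξ₁.arg - ξ₂.arg - (μ - ν) * (√τ)⁻¹| ≤ (√τ)⁻¹ := by
  obtain ⟨-, h₁, h₁'⟩ := hξ₁
  obtain ⟨-, h₂, h₂'⟩ := hξ₂
  rw [abs_le]
  constructor <;> linarith

theorem abs_arg_le_of_mem_GammaSet {τ μ : ℝ} {ξ : ℂ} (hτ : 0 < τ)
    (hμ : |μ| ≤ √τ * (π / 8) - 1) (hξ : ξ ∈ GammaSet τ μ) : |ξ.arg| ≤ π / 8 := by
  obtain ⟨-, h, h'⟩ := hξ
  have hs : 0 < (√τ)⁻¹ := by positivity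
  have hμs : |μ| * (√τ)⁻¹ ≤ π / 8 - (√τ)⁻¹ := by
    calc |μ| * (√τ)⁻¹ ≤ (√τ * (π / 8) - 1) * (√τ)⁻¹ := by gcongr
      _ = π / 8 - (√τ)⁻¹ := by field_simp
  have hμ₁ := neg_abs_le μ
  have hμ₂ := le_abs_self μ
  rw [abs_le]
  constructor <;> nlinarith

theorem exists_of_mem_uSet_add {τ μ ν : ℝ} {J J' : Set ℝ} {x : ℂ × ℝ}
    (hx : x ∈ uSet τ μ J + uSet τ ν J') :
    ∃ ξ₁ ξ₂ : ℂ, ξ₁ ∈ GammaSet τ μ ∧ ξ₂ ∈ GammaSet τ ν ∧ ‖ξ₁‖ ∈ J ∧ ‖ξ₂‖ ∈ J' ∧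
      x.1 = ξ₁ + ξ₂ ∧ |x.2 - (‖ξ₁‖ + ‖ξ₂‖)| ≤ 2 * τ⁻¹ := by
  obtain ⟨p, ⟨hp, hpΓ, hpJ⟩, q, ⟨hq, hqΓ, hqJ⟩, rfl⟩ := hx
  refine ⟨p.1, q.1, hpΓ, hqΓ, hpJ, hqJ, rfl, ?_⟩
  rw [abs_le] at hp hq ⊢
  constructor <;> simp only [Prod.snd_add] <;> linarith

theorem abs_abs_sub_abs_le_of_mem_uSet_add {τ α₁ β₁ α₂ β₂ : ℝ} (hτ : 0 < τ)
    (hα₁ : 1 ≤ α₁) (hβ₁ : β₁ ≤ 2) (hJ₁ : β₁ - α₁ ≤ (√τ)⁻¹)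
    (hα₂ : 1 ≤ α₂) (hβ₂ : β₂ ≤ 2) (hJ₂ : β₂ - α₂ ≤ (√τ)⁻¹)
    {x : ℂ × ℝ} {μ ν μ' ν' : ℤ}
    (hμ : μ ∈ calN τ) (hν : ν ∈ calN τ) (hμ' : μ' ∈ calN τ) (hν' : ν' ∈ calN τ)
    (hx : x ∈ uSet τ μ (Icc α₁ β₁) + uSet τ ν (Icc α₂ β₂))
    (hx' : x ∈ uSet τ μ' (Icc α₁ β₁) + uSet τ ν' (Icc α₂ β₂)) :
    |(|μ - ν| - |μ' - ν'|)| ≤ 11 := by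
  obtain ⟨ξ₁, ξ₂, hξ₁, hξ₂, hr₁, hr₂, hx₁, hx₂⟩ := exists_of_mem_uSet_add hx
  obtain ⟨ξ₁', ξ₂', hξ₁', hξ₂', hr₁', hr₂', hx₁', hx₂'⟩ := exists_of_mem_uSet_add hx'
  set s := (√τ)⁻¹
  have hs : 0 < s := by positivity
  have hτs : τ⁻¹ = s ^ 2 := by rw [inv_pow, sq_sqrt hτ.le]
  have hJ₁' : Icc α₁ β₁ ⊆ Icc 1 2 := Icc_subset_Icc hα₁ hβ₁
  have hJ₂' : Icc α₂ β₂ ⊆ Icc 1 2 := Icc_subset_Icc hα₂ hβ₂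
  have hsum : |(‖ξ₁‖ + ‖ξ₂‖) - (‖ξ₁'‖ + ‖ξ₂'‖)| ≤ 4 * s ^ 2 := by
    rw [hτs, abs_le] at hx₂ hx₂'
    rw [abs_le]
    constructor <;> linarith
  have heq : ‖ξ₁‖ ^ 2 + ‖ξ₂‖ ^ 2 + 2 * ‖ξ₁‖ * ‖ξ₂‖ * cos (ξ₁.arg - ξ₂.arg) =
      ‖ξ₁'‖ ^ 2 + ‖ξ₂'‖ ^ 2 + 2 * ‖ξ₁'‖ * ‖ξ₂'‖ * cos (ξ₁'.arg - ξ₂'.arg) := by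
    rw [← Complex.sq_norm_add, ← Complex.sq_norm_add, ← hx₁, ← hx₁']
  have harg : ∀ {μ ν : ℤ} {ξ₁ ξ₂ : ℂ}, μ ∈ calN τ → ν ∈ calN τ →
      ξ₁ ∈ GammaSet τ μ → ξ₂ ∈ GammaSet τ ν → |ξ₁.arg - ξ₂.arg| ≤ π / 4 :=
    fun hμ hν hξ₁ hξ₂ => (abs_sub _ _).trans (by
      linarith [abs_arg_le_of_mem_GammaSet hτ hμ hξ₁, abs_arg_le_of_mem_GammaSet hτ hν hξ₂])
  have hangle := abs_abs_sub_abs_le_of_third_side_eq hs.le (hJ₁' hr₁) (hJ₂' hr₂) (hJ₁' hr₁')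
    (hJ₂' hr₂') (Real.dist_le_of_mem_Icc hr₁ hr₁' |>.trans hJ₁)
    (Real.dist_le_of_mem_Icc hr₂ hr₂' |>.trans hJ₂) hsum heq
    (harg hμ hν hξ₁ hξ₂) (harg hμ' hν' hξ₁' hξ₂')
  have hm := abs_arg_sub_arg_sub_le_of_mem_GammaSet hξ₁ hξ₂
  have hm' := abs_arg_sub_arg_sub_le_of_mem_GammaSet hξ₁' hξ₂'
  rw [← Int.cast_sub] at hm hm'
  have hreal := abs_abs_sub_abs_le_of_abs_sub_mul_le hs hm hm' hangle
  norm_num at hreal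
  exact_mod_cast hreal

theorem finite_and_ncard_le_of_abs_sub_abs_le {S : Set (ℤ × ℤ)} {K : ℕ}
    (hsum : ∀ p ∈ S, ∀ q ∈ S, p.1 + p.2 = q.1 + q.2)
    (hdiff : ∀ p ∈ S, ∀ q ∈ S, |(|p.1 - p.2| - |q.1 - q.2|)| ≤ K) :
    S.Finite ∧ S.ncard ≤ 2 * (2 * K + 1) := by
  rcases S.eq_empty_or_nonempty with rfl | ⟨q, hq⟩
  · simp
  set k := |q.1 - q.2|
  let T : Finset ℤ := Finset.Icc (k - K) (k + K) ∪ Finset.Icc (-k - K) (-k + K)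
  have hmaps : MapsTo (fun p : ℤ × ℤ => p.1 - p.2) S T := fun p hp => by
    have h := abs_le.1 (hdiff p hp q hq)
    simp only [T, Finset.coe_union, Finset.coe_Icc, mem_union, mem_Icc]
    rcases abs_cases (p.1 - p.2) with ⟨hp', -⟩ | ⟨hp', -⟩ <;> omega
  have hinj : InjOn (fun p : ℤ × ℤ => p.1 - p.2) S := fun p hp p' hp' h => by
    have := hsum p hp p' hp'
    simp only at h
    exact Prod.ext (by omega) (by omega)
  refine ⟨Finite.of_injOn hmaps hinj T.finite_toSet, ?_⟩
  calc S.ncard ≤ (T : Set ℤ).ncard := ncard_le_ncard_of_injOn _ hmaps hinj T.finite_toSet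
    _ ≤ (Finset.Icc (k - K) (k + K)).card + (Finset.Icc (-k - K) (-k + K)).card := by
        rw [ncard_coe_finset]
        exact Finset.card_union_le _ _
    _ = 2 * (2 * K + 1) := by
        rw [Int.card_Icc, Int.card_Icc]
        omega

theorem statement2 :
    ∃ C : ℕ, 0 < C ∧
      ∀ τ : ℝ, (10 : ℝ) ^ 6 < τ →
      ∀ α₁ β₁ α₂ β₂ : ℝ,
        1 ≤ α₁ → α₁ ≤ β₁ → β₁ ≤ 2 → β₁ - α₁ ≤ (Real.sqrt τ)⁻¹ →
        1 ≤ α₂ → α₂ ≤ β₂ → β₂ ≤ 2 → β₂ - α₂ ≤ (Real.sqrt τ)⁻¹ →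
        ∀ a ∈ calI τ,
        ∀ x : ℂ × ℝ,
          {p : ℤ × ℤ | p.1 ∈ calN τ ∧ p.2 ∈ calN τ ∧
              ((p.1 : ℝ) + (p.2 : ℝ)) / 2 = a ∧
              x ∈ uSet τ (p.1 : ℝ) (Icc α₁ β₁) + uSet τ (p.2 : ℝ) (Icc α₂ β₂)}.Finite ∧
          {p : ℤ × ℤ | p.1 ∈ calN τ ∧ p.2 ∈ calN τ ∧
              ((p.1 : ℝ) + (p.2 : ℝ)) / 2 = a ∧
              x ∈ uSet τ (p.1 : ℝ) (Icc α₁ β₁) + uSet τ (p.2 : ℝ) (Icc α₂ β₂)}.ncard ≤ C := by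
  refine ⟨2 * (2 * 11 + 1), by norm_num, ?_⟩
  rintro τ hτ α₁ β₁ α₂ β₂ hα₁ - hβ₁ hJ₁ hα₂ - hβ₂ hJ₂ a - x
  apply finite_and_ncard_le_of_abs_sub_abs_le
  · rintro p ⟨-, -, hp, -⟩ q ⟨-, -, hq, -⟩
    exact_mod_cast (by linarith : (p.1 : ℝ) + p.2 = q.1 + q.2)
  · rintro p ⟨hp₁, hp₂, -, hp⟩ q ⟨hq₁, hq₂, -, hq⟩
    exact_mod_cast abs_abs_sub_abs_le_of_mem_uSet_add (by linarith) hα₁ hβ₁ hJ₁ hα₂ hβ₂ hJ₂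
      hp₁ hp₂ hq₁ hq₂ hp hq
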